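/- Let $\Lambda$ be a finite dimensional Auslander algebra. Then the class of finitely generated $\Lambda$-modules of projective dimension at most 1 is closed under submodules. -/

import Mathlib

universe u

open CategoryTheory

section Defs

variable (R : Type u) [Ring R]

/-- `pdLE R n M` : the module `M` has projective dimension at most `n`. -/
def pdLE : ℕ → ModuleCat.{u} R → Prop
  | 0, M => Module.Projective R M
  | (n+1), M => ∃ (P : ModuleCat.{u} R) (f : P →ₗ[R] M),
      Module.Projective R P ∧ Function.Surjective f ∧
      pdLE n (ModuleCat.of R (LinearMap.ker f))

/-- The projective dimension of a module, as an element of `ℕ∞` (`⊤` if no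
finite projective resolution exists). -/
noncomputable def projDim (M : ModuleCat.{u} R) : ℕ∞ :=
  sInf ((↑) '' {n : ℕ | pdLE R n M})

/-- `idLE R n M` : the module `M` has injective dimension at most `n`. -/
def idLE : ℕ → ModuleCat.{u} R → Prop
  | 0, M => Module.Injective R M
  | (n+1), M => ∃ (I : ModuleCat.{u} R) (f : M →ₗ[R] I),
      Module.Injective R I ∧ Function.Injective f ∧
      idLE n (ModuleCat.of R (I ⧸ LinearMap.range f))

/-- The injective dimension of a module, as an element of `ℕ∞`. -/
noncomputable def injDim (M : ModuleCat.{u} R) : ℕ∞ :=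
  sInf ((↑) '' {n : ℕ | idLE R n M})

/-- The global dimension (computed on finitely generated modules) is at most `n`. -/
def gldimLE (n : ℕ) : Prop :=
  ∀ M : ModuleCat.{u} R, Module.Finite R M → pdLE R n M

/-- The global dimension of `R`, computed on finitely generated modules. -/
noncomputable def globalDim : ℕ∞ :=
  sInf ((↑) '' {n : ℕ | gldimLE R n})

/-- The socle of a module: the sum of all its simple submodules. -/
def socle (M : Type u) [AddCommGroup M] [Module R M] : Submodule R M :=
  sSup {S : Submodule R M | IsSimpleModule R S}

/-- An algebra is an Auslander algebra if its global dimension is at most `2` and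
its dominant dimension is at least `2`, i.e. there is an exact sequence
`0 → R → I₀ → I₁` with `I₀`, `I₁` both projective and injective. -/
def IsAuslander : Prop :=
  gldimLE R 2 ∧
  ∃ (I₀ I₁ : ModuleCat.{u} R) (f : R →ₗ[R] I₀) (g : I₀ →ₗ[R] I₁),
    Module.Injective R I₀ ∧ Module.Projective R I₀ ∧
    Module.Injective R I₁ ∧ Module.Projective R I₁ ∧
    Function.Injective f ∧ LinearMap.ker g = LinearMap.range f

/-- `f : M →ₗ[R] I` realizes `I` as an injective envelope of `M`: `I` is injective
and `f` is an essential embedding. -/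
def IsInjectiveEnvelope {M I : Type u} [AddCommGroup M] [Module R M]
    [AddCommGroup I] [Module R I] (f : M →ₗ[R] I) : Prop :=
  Module.Injective R I ∧ Function.Injective f ∧
    ∀ N : Submodule R I, N ≠ ⊥ → N ⊓ LinearMap.range f ≠ ⊥

end Defs


section Aux

variable {R : Type u} [Ring R]

/-- If `v : D → X` has a linear section `s`, then `D ≃ ker v × X`. -/
noncomputable def splitKerEquiv {D X : Type u} [AddCommGroup D] [Module R D]
    [AddCommGroup X] [Module R X] (v : D →ₗ[R] X) (s : X →ₗ[R] D)
    (hs : ∀ x, v (s x) = x) : D ≃ₗ[R] (LinearMap.ker v × X) where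
  toFun d := (⟨d - s (v d), by simp [LinearMap.mem_ker, hs]⟩, v d)
  map_add' a b := by
    have h : (a + b) - s (v (a + b)) = (a - s (v a)) + (b - s (v b)) := by
      rw [map_add, map_add]; abel
    exact Prod.ext (Subtype.ext h) (map_add v a b)
  map_smul' r a := by
    have h : (r • a) - s (v (r • a)) = r • (a - s (v a)) := by
      rw [map_smul, map_smul, smul_sub]
    exact Prod.ext (Subtype.ext h) (map_smul v r a)
  invFun p := p.1.1 + s p.2
  left_inv d := by simp
  right_inv p := by
    have h0 : v (p.1 : D) = 0 := p.1.2
    ext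
    · simp [h0, hs]
    · simp [h0, hs]

variable {P Q X : Type u} [AddCommGroup P] [Module R P]
  [AddCommGroup Q] [Module R Q] [AddCommGroup X] [Module R X]

/-- Schanuel's lemma, as a linear equivalence. -/
noncomputable def schanuelEquiv (e : P →ₗ[R] X) (g : Q →ₗ[R] X)
    (hP : Module.Projective R P) (hQ : Module.Projective R Q)
    (he : Function.Surjective e) (hg : Function.Surjective g) :
    (LinearMap.ker e × Q) ≃ₗ[R] (LinearMap.ker g × P) := by
  classical
  set D : Submodule R (P × Q) :=
    LinearMap.ker ((e.comp (LinearMap.fst R P Q)) - (g.comp (LinearMap.snd R P Q))) with hD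
  have memD : ∀ z : P × Q, z ∈ D ↔ e z.1 = g z.2 := by
    intro z
    simp [hD, LinearMap.mem_ker, sub_eq_zero]
  -- section of snd
  haveI := hP; haveI := hQ
  let t : Q →ₗ[R] P := (Module.projective_lifting_property e g he).choose
  have ht : e.comp t = g := (Module.projective_lifting_property e g he).choose_spec
  let t' : P →ₗ[R] Q := (Module.projective_lifting_property g e hg).choose
  have ht' : g.comp t' = e := (Module.projective_lifting_property g e hg).choose_spec
  let v : D →ₗ[R] Q := (LinearMap.snd R P Q).comp D.subtype
  let s : Q →ₗ[R] D := LinearMap.codRestrict D (t.prod LinearMap.id) (fun q => by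
    rw [memD]
    simpa using LinearMap.congr_fun ht q)
  have hs : ∀ q, v (s q) = q := fun q => rfl
  let u : D →ₗ[R] P := (LinearMap.fst R P Q).comp D.subtype
  let s' : P →ₗ[R] D := LinearMap.codRestrict D (LinearMap.id.prod t') (fun p => by
    rw [memD]
    simpa using (LinearMap.congr_fun ht' p).symm)
  have hs' : ∀ p, u (s' p) = p := fun p => rfl
  -- ker v ≃ ker e
  let kv : (LinearMap.ker v) ≃ₗ[R] LinearMap.ker e :=
    { toFun := fun y => ⟨(y.1 : P × Q).1, by
        have h2 : (y.1 : P × Q).2 = 0 := y.2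
        have h1 : e (y.1 : P × Q).1 = g (y.1 : P × Q).2 := (memD _).mp y.1.2
        rw [LinearMap.mem_ker, h1, h2, map_zero]⟩
      map_add' := fun a b => rfl
      map_smul' := fun r a => rfl
      invFun := fun x => ⟨⟨((x : P), 0), by rw [memD]; simp [x.2]⟩, by
        simp [v, LinearMap.mem_ker]⟩
      left_inv := fun y => by
        ext
        · rfl
        · exact (show ((y.1 : P × Q).2 = 0) from y.2).symm
      right_inv := fun x => rfl }
  let ku : (LinearMap.ker u) ≃ₗ[R] LinearMap.ker g :=
    { toFun := fun y => ⟨(y.1 : P × Q).2, by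
        have h2 : (y.1 : P × Q).1 = 0 := y.2
        have h1 : e (y.1 : P × Q).1 = g (y.1 : P × Q).2 := (memD _).mp y.1.2
        rw [LinearMap.mem_ker, ← h1, h2, map_zero]⟩
      map_add' := fun a b => rfl
      map_smul' := fun r a => rfl
      invFun := fun x => ⟨⟨(0, (x : Q)), by rw [memD]; simp [x.2]⟩, by
        simp [u, LinearMap.mem_ker]⟩
      left_inv := fun y => by
        ext
        · exact (show ((y.1 : P × Q).1 = 0) from y.2).symm
        · rfl
      right_inv := fun x => rfl }
  exact (kv.symm.prodCongr (LinearEquiv.refl R Q)).trans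
    ((splitKerEquiv v s hs).symm.trans
      ((splitKerEquiv u s' hs').trans (ku.prodCongr (LinearEquiv.refl R P))))

/-- Schanuel's lemma, projectivity form. -/
theorem schanuel_proj (e : P →ₗ[R] X) (g : Q →ₗ[R] X)
    (hP : Module.Projective R P) (hQ : Module.Projective R Q)
    (he : Function.Surjective e) (hg : Function.Surjective g)
    (hker : Module.Projective R (LinearMap.ker g)) :
    Module.Projective R (LinearMap.ker e) := by
  haveI := hP; haveI := hQ; haveI := hker
  haveI : Module.Projective R (LinearMap.ker g × P) := inferInstance
  haveI : Module.Projective R (LinearMap.ker e × Q) :=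
    Module.Projective.of_equiv (schanuelEquiv e g hP hQ he hg).symm
  exact Module.Projective.of_split (LinearMap.inl R _ Q) (LinearMap.fst R _ Q)
    (by ext x; rfl)

/-- kernel of `φ × id` is the kernel of `φ`. -/
noncomputable def kerProdMapIdEquiv {A B C : Type u} [AddCommGroup A] [Module R A]
    [AddCommGroup B] [Module R B] [AddCommGroup C] [Module R C] (φ : A →ₗ[R] B) :
    LinearMap.ker (φ.prodMap (LinearMap.id : C →ₗ[R] C)) ≃ₗ[R] LinearMap.ker φ where
  toFun x := ⟨(x.1 : A × C).1, by
    have hx : (φ (x.1 : A × C).1, (x.1 : A × C).2) = (0 : B × C) := x.2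
    exact (Prod.ext_iff.mp hx).1⟩
  map_add' _ _ := rfl
  map_smul' _ _ := rfl
  invFun w := ⟨((w : A), 0), by
    have : φ (w : A) = 0 := w.2
    simp [LinearMap.mem_ker, this, Prod.ext_iff]⟩
  left_inv x := by
    have hx : (φ (x.1 : A × C).1, (x.1 : A × C).2) = (0 : B × C) := x.2
    ext
    · rfl
    · exact ((Prod.ext_iff.mp hx).2).symm
  right_inv w := rfl

end Aux



/-- Over a finite dimensional Auslander algebra, the class of finitely generated modules
of projective dimension at most `1` is closed under submodules. -/
theorem stmt_18 (k Λ : Type u) [Field k] [Ring Λ] [Algebra k Λ] [FiniteDimensional k Λ]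
    (hΛ : IsAuslander Λ)
    (M : Type u) [AddCommGroup M] [Module Λ M] [Module.Finite Λ M]
    (hM : pdLE Λ 1 (ModuleCat.of Λ M))
    (N : Submodule Λ M) :
    pdLE Λ 1 (ModuleCat.of Λ ↥N) := by
  classical
  obtain ⟨hgl, -⟩ := hΛ
  obtain ⟨P, f, hPproj, hfsurj, hLproj⟩ := hM
  have hLproj' : Module.Projective Λ (LinearMap.ker f) := hLproj
  -- resolution of C := M ⧸ N of length 2 from the global dimension bound
  obtain ⟨R₀, g₀, hR₀, hg₀, hpd1⟩ := hgl (ModuleCat.of Λ (M ⧸ N)) (inferInstanceAs (Module.Finite Λ (M ⧸ N)))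
  obtain ⟨R₁, g₁, hR₁, hg₁, hK₂⟩ := hpd1
  have hK₂' : Module.Projective Λ (LinearMap.ker g₁) := hK₂
  -- the other resolution of M ⧸ N, through P
  let e₀ : ↥P →ₗ[Λ] (↥(ModuleCat.of Λ (M ⧸ N))) := N.mkQ.comp f
  have he₀ : Function.Surjective e₀ := N.mkQ_surjective.comp hfsurj
  let σ := schanuelEquiv e₀ g₀ hPproj hR₀ he₀ hg₀
  -- free cover of N
  let Q₀ : Type u := (↥N →₀ Λ)
  let g : Q₀ →ₗ[Λ] ↥N := Finsupp.linearCombination Λ id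
  have hg : Function.Surjective g := Finsupp.linearCombination_id_surjective Λ ↥N
  -- the restriction of f to ker e₀ lands in N
  have hmem : ∀ x : ↥(LinearMap.ker e₀), f ((LinearMap.ker e₀).subtype x) ∈ N := by
    intro x
    have hx : e₀ (x : ↥P) = 0 := x.2
    have : N.mkQ (f (x : ↥P)) = 0 := hx
    simpa [Submodule.Quotient.mk_eq_zero] using this
  let f' : ↥(LinearMap.ker e₀) →ₗ[Λ] ↥N :=
    LinearMap.codRestrict N (f.comp (LinearMap.ker e₀).subtype) hmem
  have hf'coe : ∀ x : ↥(LinearMap.ker e₀), ((f' x : M)) = f (x : ↥P) := fun x => rfl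
  have hf' : Function.Surjective f' := by
    rintro ⟨n, hn⟩
    obtain ⟨p, hp⟩ := hfsurj n
    have hpmem : p ∈ LinearMap.ker e₀ := by
      show N.mkQ (f p) = 0
      rw [hp]
      simpa [Submodule.Quotient.mk_eq_zero] using hn
    exact ⟨⟨p, hpmem⟩, Subtype.ext (by simp [hf'coe, hp])⟩
  -- lift g through f'
  haveI : Module.Projective Λ Q₀ := inferInstance
  obtain ⟨G, hG⟩ := Module.projective_lifting_property f' g hf'
  have hGapp : ∀ q, f' (G q) = g q := fun q => LinearMap.congr_fun hG q
  -- ker f ≤ ker e₀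
  have hle : LinearMap.ker f ≤ LinearMap.ker e₀ := by
    intro x hx
    show N.mkQ (f x) = 0
    rw [LinearMap.mem_ker.mp hx, map_zero]
  let inc : ↥(LinearMap.ker f) →ₗ[Λ] ↥(LinearMap.ker e₀) := Submodule.inclusion hle
  let e₁ : (Q₀ × ↥(LinearMap.ker f)) →ₗ[Λ] ↥(LinearMap.ker e₀) := G.coprod inc
  have he₁ : Function.Surjective e₁ := by
    intro y
    obtain ⟨q, hq⟩ := hg (f' y)
    have hker : ((y - G q : ↥(LinearMap.ker e₀)) : ↥P) ∈ LinearMap.ker f := by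
      have h1 : f' (y - G q) = 0 := by rw [map_sub, hGapp, hq, sub_self]
      have : f ((y - G q : ↥(LinearMap.ker e₀)) : ↥P) = ((f' (y - G q) : M)) := rfl
      rw [LinearMap.mem_ker, this, h1, Submodule.coe_zero]
    refine ⟨(q, ⟨_, hker⟩), ?_⟩
    show G q + inc ⟨_, hker⟩ = y
    have : inc ⟨_, hker⟩ = y - G q := Subtype.ext rfl
    rw [this]; abel
  -- ker e₁ ≃ ker g
  have hfG0 : ∀ w : ↥(LinearMap.ker g), f ((G (w : Q₀) : ↥P)) = 0 := by
    intro w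
    have h1 : f' (G (w : Q₀)) = 0 := by rw [hGapp, LinearMap.mem_ker.mp w.2]
    have : f ((G (w : Q₀) : ↥P)) = ((f' (G (w : Q₀)) : M)) := rfl
    rw [this, h1, Submodule.coe_zero]
  let ι : ↥(LinearMap.ker g) ≃ₗ[Λ] ↥(LinearMap.ker e₁) :=
    { toFun := fun w => ⟨((w : Q₀), ⟨-((G (w : Q₀) : ↥P)), by
        rw [LinearMap.mem_ker, map_neg, hfG0, neg_zero]⟩), by
        show G (w : Q₀) + inc _ = 0
        refine Subtype.ext ?_
        show ((G (w : Q₀) : ↥P)) + (-((G (w : Q₀) : ↥P))) = 0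
        rw [add_neg_cancel]⟩
      map_add' := fun a b => by
        refine Subtype.ext (Prod.ext rfl (Subtype.ext ?_))
        show -((G ((a : Q₀) + (b : Q₀)) : ↥P)) = -((G (a : Q₀) : ↥P)) + -((G (b : Q₀) : ↥P))
        rw [map_add]; push_cast; abel
      map_smul' := fun r a => by
        refine Subtype.ext (Prod.ext rfl (Subtype.ext ?_))
        show -((G (r • (a : Q₀)) : ↥P)) = r • (-((G (a : Q₀) : ↥P)))
        rw [map_smul, smul_neg]; rfl
      invFun := fun x => ⟨(x : Q₀ × ↥(LinearMap.ker f)).1, by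
        have hx : G (x : Q₀ × ↥(LinearMap.ker f)).1 + inc (x : Q₀ × ↥(LinearMap.ker f)).2 = 0 := x.2
        have h2 : f' (G (x : Q₀ × ↥(LinearMap.ker f)).1) = 0 := by
          have h3 : G (x : Q₀ × ↥(LinearMap.ker f)).1 = - inc (x : Q₀ × ↥(LinearMap.ker f)).2 :=
            by rw [eq_neg_iff_add_eq_zero]; exact hx
          rw [h3, map_neg]
          have h4 : f' (inc (x : Q₀ × ↥(LinearMap.ker f)).2) = 0 := by
            refine Subtype.ext ?_
            show ((f' (inc (x : Q₀ × ↥(LinearMap.ker f)).2) : M)) = 0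
            rw [hf'coe]
            exact LinearMap.mem_ker.mp (x : Q₀ × ↥(LinearMap.ker f)).2.2
          rw [h4, neg_zero]
        rw [LinearMap.mem_ker, ← hGapp, h2]⟩
      left_inv := fun w => rfl
      right_inv := fun x => by
        have hx : G (x : Q₀ × ↥(LinearMap.ker f)).1 + inc (x : Q₀ × ↥(LinearMap.ker f)).2 = 0 := x.2
        refine Subtype.ext (Prod.ext rfl (Subtype.ext ?_))
        show -((G (x : Q₀ × ↥(LinearMap.ker f)).1 : ↥P)) = (((x : Q₀ × ↥(LinearMap.ker f)).2 : ↥P))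
        have h5 : ((G (x : Q₀ × ↥(LinearMap.ker f)).1 : ↥P))
            + ((inc (x : Q₀ × ↥(LinearMap.ker f)).2 : ↥P)) = 0 := by
          simpa using congrArg (fun z : ↥(LinearMap.ker e₀) => (z : ↥P)) hx
        exact neg_eq_of_add_eq_zero_right h5 }
  -- final Schanuel comparison
  haveI := hPproj; haveI := hR₀; haveI := hR₁
  let E : ((Q₀ × ↥(LinearMap.ker f)) × ↥R₀) →ₗ[Λ] (↥(LinearMap.ker g₀) × ↥P) :=
    (σ : (↥(LinearMap.ker e₀) × ↥R₀) →ₗ[Λ] (↥(LinearMap.ker g₀) × ↥P)).comp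
      (e₁.prodMap (LinearMap.id : ↥R₀ →ₗ[Λ] ↥R₀))
  let Gm : (↥R₁ × ↥P) →ₗ[Λ] (↥(LinearMap.ker g₀) × ↥P) :=
    g₁.prodMap (LinearMap.id : ↥P →ₗ[Λ] ↥P)
  have hEproj : Module.Projective Λ ((Q₀ × ↥(LinearMap.ker f)) × ↥R₀) := by
    haveI := hLproj'
    infer_instance
  have hGmproj : Module.Projective Λ (↥R₁ × ↥P) := inferInstance
  have hEsurj : Function.Surjective E :=
    σ.surjective.comp (Function.Surjective.prodMap he₁ Function.surjective_id)
  have hGmsurj : Function.Surjective Gm :=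
    Function.Surjective.prodMap hg₁ Function.surjective_id
  haveI := hK₂'
  have hGmker : Module.Projective Λ (LinearMap.ker Gm) :=
    Module.Projective.of_equiv (kerProdMapIdEquiv (C := ↥P) g₁).symm
  have hEker : Module.Projective Λ (LinearMap.ker E) :=
    schanuel_proj E Gm hEproj hGmproj hEsurj hGmsurj hGmker
  have hkerEq : LinearMap.ker E = LinearMap.ker (e₁.prodMap (LinearMap.id : ↥R₀ →ₗ[Λ] ↥R₀)) := by
    rw [LinearMap.ker_comp, LinearEquiv.ker, Submodule.comap_bot]
  rw [hkerEq] at hEker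
  haveI := hEker
  have hkere₁ : Module.Projective Λ (LinearMap.ker e₁) :=
    Module.Projective.of_equiv (kerProdMapIdEquiv (C := ↥R₀) e₁)
  haveI := hkere₁
  have hΩ : Module.Projective Λ (LinearMap.ker g) :=
    Module.Projective.of_equiv ι.symm
  refine ⟨ModuleCat.of Λ Q₀, g, inferInstanceAs (Module.Projective Λ Q₀), hg, ?_⟩
  exact hΩ
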